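/- Let P_B be a backward policy with P_B(s|s') > 0 for every edge s→s' of G, and let R : X → ℝ with R(x) > 0 for all x ∈ X. Then there exists exactly one pair (P_F, Z), with Z > 0 and P_F a forward policy, such that (P_F, P_B, Z) satisfies trajectory balance for R; moreover this Z equals Σ_{x∈X} R(x). -/

import Mathlib

open scoped BigOperators Classical

/-- The GFlowNet state space `S = {0,1,⊘}^D`: functions from `Fin D` to `Option Bool`,
with `none` denoting the unspecified entry `⊘`. -/
abbrev GState (D : ℕ) := Fin D → Option Bool

/-- The initial state `s₀`, with all entries `⊘`. -/
def initState (D : ℕ) : GState D := fun _ => none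

/-- `s'` is a child of `s` (edge `s → s'` of the DAG `G`): `s'` is obtained from `s`
by changing exactly one `⊘`-entry of `s` to `0` or `1`. -/
def IsChild {D : ℕ} (s s' : GState D) : Prop :=
  ∃ (i : Fin D) (b : Bool), s i = none ∧ s' = Function.update s i (some b)

/-- Terminal states: no `⊘`-entry. -/
def IsTerminal {D : ℕ} (s : GState D) : Prop := ∀ i, s i ≠ none

/-- The embedding of `X = {0,1}^D` as the set of terminal states. -/
def ofX {D : ℕ} (x : Fin D → Bool) : GState D := fun i => some (x i)

/-- `|s|`: the number of non-`⊘` entries of `s`. -/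
def numAssigned {D : ℕ} (s : GState D) : ℕ :=
  (Finset.univ.filter fun i => s i ≠ none).card

/-- A complete trajectory `τ = (t₀ → t₁ → ⋯ → t_n)`, encoded as the list of its states:
it starts at `s₀`, each consecutive pair is an edge of `G`, and it ends at a terminal state. -/
def IsCompleteTraj {D : ℕ} (l : List (GState D)) : Prop :=
  l.head? = some (initState D) ∧ l.Chain' IsChild ∧
    ∃ s, l.getLast? = some s ∧ IsTerminal s

/-- The trajectory `l` ends at the terminal state corresponding to `x ∈ X`. -/
def EndsAt {D : ℕ} (l : List (GState D)) (x : Fin D → Bool) : Prop :=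
  l.getLast? = some (ofX x)

/-- `PF` is a forward policy: for every nonterminal `s`, `PF s ·` is a probability
distribution supported on the children of `s` (`PF s s'` is `P_F(s'|s)`). -/
def IsForwardPolicy {D : ℕ} (PF : GState D → GState D → ℝ) : Prop :=
  ∀ s : GState D, ¬ IsTerminal s →
    (∀ s', 0 ≤ PF s s') ∧ (∀ s', PF s s' ≠ 0 → IsChild s s') ∧
    (∑ s' : GState D, PF s s' = 1)

/-- `PB` is a backward policy: for every noninitial `s'`, `PB s' ·` is a probability
distribution supported on the parents of `s'` (`PB s' s` is `P_B(s|s')`). -/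
def IsBackwardPolicy {D : ℕ} (PB : GState D → GState D → ℝ) : Prop :=
  ∀ s' : GState D, s' ≠ initState D →
    (∀ s, 0 ≤ PB s' s) ∧ (∀ s, PB s' s ≠ 0 → IsChild s s') ∧
    (∑ s : GState D, PB s' s = 1)

/-- `P_F(τ) = ∏_{i<n} P_F(t_{i+1}|t_i)` along a trajectory. -/
def trajPF {D : ℕ} (PF : GState D → GState D → ℝ) (l : List (GState D)) : ℝ :=
  ((l.zip l.tail).map fun p => PF p.1 p.2).prod

/-- `P_B(τ|x) = ∏_{i<n} P_B(t_i|t_{i+1})` along a trajectory. -/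
def trajPB {D : ℕ} (PB : GState D → GState D → ℝ) (l : List (GState D)) : ℝ :=
  ((l.zip l.tail).map fun p => PB p.2 p.1).prod

/-- Trajectory balance for reward `R`: `Z·P_F(τ) = R(x)·P_B(τ|x)` for every complete
trajectory `τ` ending at `x`. -/
def TrajBalance {D : ℕ} (PF PB : GState D → GState D → ℝ) (Z : ℝ)
    (R : (Fin D → Bool) → ℝ) : Prop :=
  ∀ (l : List (GState D)) (x : Fin D → Bool),
    IsCompleteTraj l → EndsAt l x → Z * trajPF PF l = R x * trajPB PB l

/-- The terminating probability `P_T(x)`: the sum of `P_F(τ)` over all complete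
trajectories ending at `x`. -/
noncomputable def PT {D : ℕ} (PF : GState D → GState D → ℝ) (x : Fin D → Bool) : ℝ :=
  ∑ᶠ l ∈ {l : List (GState D) | IsCompleteTraj l ∧ EndsAt l x}, trajPF PF l

/-- A path in `G` from `s` to `t`, encoded as the list of its states. -/
def IsPath {D : ℕ} (l : List (GState D)) (s t : GState D) : Prop :=
  l.Chain' IsChild ∧ l.head? = some s ∧ l.getLast? = some t
/-- The state flow `F(s)`: sum of `F(τ) = Z·P_F(τ)` over complete trajectories through `s`. -/
noncomputable def stateFlow {D : ℕ} (PF : GState D → GState D → ℝ) (Z : ℝ)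
    (s : GState D) : ℝ :=
  ∑ᶠ l ∈ {l : List (GState D) | IsCompleteTraj l ∧ s ∈ l}, Z * trajPF PF l

/-- The edge flow `F(s→s')`: sum of `F(τ) = Z·P_F(τ)` over complete trajectories
containing the edge `s → s'`. -/
noncomputable def edgeFlow {D : ℕ} (PF : GState D → GState D → ℝ) (Z : ℝ)
    (s s' : GState D) : ℝ :=
  ∑ᶠ l ∈ {l : List (GState D) | IsCompleteTraj l ∧ (s, s') ∈ l.zip l.tail}, Z * trajPF PF l

/-- The Shannon entropy `H[P_F(·|s)]` of the forward policy at `s` (natural log,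
with `0·log 0 = 0`). -/
noncomputable def stepEntropyF {D : ℕ} (PF : GState D → GState D → ℝ) (s : GState D) : ℝ :=
  ∑ s' : GState D, Real.negMulLog (PF s s')

/-- The entropy of the flow determined by `P_F`:
`H[P_F] = Σ_τ P_F(τ) · Σ_{i<n} H[P_F(·|t_i)]`. -/
noncomputable def flowEntropy {D : ℕ} (PF : GState D → GState D → ℝ) : ℝ :=
  ∑ᶠ l ∈ {l : List (GState D) | IsCompleteTraj l},
    trajPF PF l * (l.dropLast.map (stepEntropyF PF)).sum

/-- The uniform backward policy `P_B°(s|s') = 1/|s'|` for each parent `s` of `s'`. -/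
noncomputable def uniformBackward (D : ℕ) : GState D → GState D → ℝ :=
  fun s' s => if IsChild s s' then 1 / (numAssigned s' : ℝ) else 0

/-!
Trajectory balance along a path `τ` from `s₀` to `s` makes `Z · P_F(τ) / P_B(τ)` independent of
`τ`: it equals the backward flow `F(s)` given by `F(x) = R(x)` on terminal states and
`F(s) = Σ_{s → s'} F(s') P_B(s|s')`, since `P_F(·|s)` sums to one. Hence `Z = F(s₀)` and
`P_F(s'|s) = F(s') P_B(s|s') / F(s)` are forced, and conversely these formulas satisfy trajectory
balance by telescoping. Summing the recursion over all states with the same number of assigned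
entries, where each `P_B(·|s')` sums to one, shows `F(s₀) = Σ_x R(x)`.
-/

section

variable {D : ℕ}

/-- Inverse of `ofX` on terminal states; `⊘`-entries are read as `false`. -/
def toX (s : GState D) : Fin D → Bool := fun i => (s i).getD false

lemma toX_ofX (x : Fin D → Bool) : toX (ofX x) = x := rfl

lemma isTerminal_ofX (x : Fin D → Bool) : IsTerminal (ofX x) := by
  simp [IsTerminal, ofX]

lemma IsTerminal.ofX_toX {s : GState D} (h : IsTerminal s) : ofX (toX s) = s := by
  funext i
  obtain ⟨b, hb⟩ := Option.ne_none_iff_exists'.mp (h i)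
  simp [ofX, toX, hb]

lemma numAssigned_le (s : GState D) : numAssigned s ≤ D := by
  simpa [numAssigned] using Finset.card_le_univ (Finset.univ.filter fun i => s i ≠ none)

lemma isTerminal_iff_numAssigned_eq {s : GState D} : IsTerminal s ↔ numAssigned s = D := by
  simpa [IsTerminal, numAssigned] using
    (Finset.card_filter_eq_iff (s := Finset.univ) (p := fun i : Fin D => s i ≠ none)).symm

lemma numAssigned_eq_zero_iff {s : GState D} : numAssigned s = 0 ↔ s = initState D := by
  simp [numAssigned, funext_iff, initState]

lemma IsChild.numAssigned_eq {s s' : GState D} (h : IsChild s s') :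
    numAssigned s' = numAssigned s + 1 := by
  obtain ⟨i, b, hi, rfl⟩ := h
  have : (Finset.univ.filter fun j => Function.update s i (some b) j ≠ none)
      = insert i (Finset.univ.filter fun j => s j ≠ none) := by
    ext j
    by_cases hj : j = i <;> simp [hj]
  rw [numAssigned, this, Finset.card_insert_of_notMem (by simp [hi]), numAssigned]

lemma exists_isChild_of_not_isTerminal {s : GState D} (h : ¬ IsTerminal s) :
    ∃ s', IsChild s s' := by
  obtain ⟨i, hi⟩ := not_forall_not.mp h
  exact ⟨Function.update s i (some true), i, true, hi, rfl⟩

lemma exists_isChild_of_ne_initState {s : GState D} (h : s ≠ initState D) :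
    ∃ p, IsChild p s := by
  obtain ⟨i, hi⟩ : ∃ i, s i ≠ none := by
    by_contra! hs
    exact h (funext hs)
  obtain ⟨b, hb⟩ := Option.ne_none_iff_exists'.mp hi
  refine ⟨Function.update s i none, i, b, Function.update_self _ _ _, ?_⟩
  rw [Function.update_idem, ← hb, Function.update_eq_self]

@[elab_as_elim]
lemma induction_of_isChild {motive : GState D → Prop} (s : GState D)
    (terminal : ∀ s, IsTerminal s → motive s)
    (step : ∀ s, ¬ IsTerminal s → (∀ s', IsChild s s' → motive s') → motive s) :
    motive s := by
  induction h : D - numAssigned s using Nat.strong_induction_on generalizing s with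
  | _ n ih =>
    by_cases hs : IsTerminal s
    · exact terminal s hs
    · refine step s hs fun s' hs' => ih _ ?_ s' rfl
      have := hs'.numAssigned_eq
      have := numAssigned_le s'
      omega

lemma trajPF_snoc (PF : GState D → GState D → ℝ) {l : List (GState D)} {t : GState D}
    (ht : l.getLast? = some t) (u : GState D) :
    trajPF PF (l ++ [u]) = trajPF PF l * PF t u := by
  induction l with
  | nil => simp at ht
  | cons a m ih =>
    cases m with
    | nil =>
      obtain rfl : a = t := by simpa using ht
      simp [trajPF]
    | cons b m =>
      rw [List.getLast?_cons_cons] at ht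
      change PF a b * trajPF PF (b :: m ++ [u]) = PF a b * trajPF PF (b :: m) * PF t u
      rw [ih ht, mul_assoc]

lemma trajPB_snoc (PB : GState D → GState D → ℝ) {l : List (GState D)} {t : GState D}
    (ht : l.getLast? = some t) (u : GState D) :
    trajPB PB (l ++ [u]) = trajPB PB l * PB u t :=
  trajPF_snoc (fun a b => PB b a) ht u

lemma trajPB_pos {PB : GState D → GState D → ℝ}
    (hPB : ∀ s s', IsChild s s' → 0 < PB s' s) {l : List (GState D)} (hl : l.IsChain IsChild) :
    0 < trajPB PB l := by
  induction l with
  | nil => simp [trajPB]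
  | cons a m ih =>
    cases m with
    | nil => simp [trajPB]
    | cons b m =>
      rw [List.isChain_cons_cons] at hl
      exact mul_pos (hPB a b hl.1) (ih hl.2)

lemma isPath_singleton (s : GState D) : IsPath [s] s s :=
  ⟨List.isChain_singleton s, rfl, rfl⟩

lemma IsPath.snoc {l : List (GState D)} {s t u : GState D} (hl : IsPath l s t)
    (htu : IsChild t u) : IsPath (l ++ [u]) s u := by
  obtain ⟨hchain, hs, ht⟩ := hl
  refine ⟨hchain.append (List.isChain_singleton u) ?_, ?_, by simp⟩
  · simpa [ht] using htu
  · cases l with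
    | nil => simp at hs
    | cons a m => simpa using hs

@[elab_as_elim]
lemma IsPath.induction_snoc {s : GState D}
    {motive : (l : List (GState D)) → (t : GState D) → IsPath l s t → Prop}
    (singleton : motive [s] s (isPath_singleton s))
    (snoc : ∀ l t u (hl : IsPath l s t) (htu : IsChild t u), motive l t hl →
      motive (l ++ [u]) u (hl.snoc htu))
    {l : List (GState D)} {t : GState D} (hl : IsPath l s t) : motive l t hl := by
  induction l using List.reverseRecOn generalizing t with
  | nil => simp [IsPath] at hl
  | append_singleton m u ih =>
    obtain ⟨hchain, hs, ht⟩ := hl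
    obtain rfl : u = t := by simpa using ht
    replace hchain : m.IsChain IsChild ∧ _ ∧ _ := List.isChain_append.mp hchain
    cases hm : m.getLast? with
    | none =>
      obtain rfl := List.getLast?_eq_none_iff.mp hm
      obtain rfl : u = s := by simpa using hs
      exact singleton
    | some t' =>
      have hne : m ≠ [] := by rintro rfl; simp at hm
      have hpath : IsPath m s t' :=
        ⟨hchain.1, by rwa [List.head?_append_of_ne_nil m hne] at hs, hm⟩
      have hedge : IsChild t' u := hchain.2.2 t' hm u rfl
      exact snoc m t' u hpath hedge (ih hpath)

lemma exists_isPath_initState (s : GState D) : ∃ l, IsPath l (initState D) s := by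
  induction h : numAssigned s generalizing s with
  | zero => exact ⟨[s], by simpa [numAssigned_eq_zero_iff.mp h] using isPath_singleton s⟩
  | succ n ih =>
    have hs : s ≠ initState D := by
      rintro rfl
      simp [numAssigned_eq_zero_iff.mpr rfl] at h
    obtain ⟨p, hp⟩ := exists_isChild_of_ne_initState hs
    obtain ⟨l, hl⟩ := ih p (by have := hp.numAssigned_eq; omega)
    exact ⟨l ++ [s], hl.snoc hp⟩

lemma IsPath.isCompleteTraj {l : List (GState D)} {x : Fin D → Bool}
    (hl : IsPath l (initState D) (ofX x)) : IsCompleteTraj l :=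
  ⟨hl.2.1, hl.1, ofX x, hl.2.2, isTerminal_ofX x⟩

lemma IsCompleteTraj.isPath {l : List (GState D)} {x : Fin D → Bool}
    (hl : IsCompleteTraj l) (hx : EndsAt l x) : IsPath l (initState D) (ofX x) :=
  ⟨hl.2.1, hl.1, hx⟩

/-- The fuel `n` is the number of `⊘`-entries of the state it is applied to, so the
recursion bottoms out exactly at the terminal states. -/
noncomputable def flowAux (PB : GState D → GState D → ℝ) (R : (Fin D → Bool) → ℝ) :
    ℕ → GState D → ℝ
  | 0, s => R (toX s)
  | n + 1, s => ∑ s', if IsChild s s' then flowAux PB R n s' * PB s' s else 0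

noncomputable def backwardFlow (PB : GState D → GState D → ℝ) (R : (Fin D → Bool) → ℝ)
    (s : GState D) : ℝ :=
  flowAux PB R (D - numAssigned s) s

noncomputable def balancedForward (PB : GState D → GState D → ℝ) (R : (Fin D → Bool) → ℝ)
    (s s' : GState D) : ℝ :=
  if IsChild s s' then backwardFlow PB R s' * PB s' s / backwardFlow PB R s else 0

def level (D k : ℕ) : Finset (GState D) := Finset.univ.filter fun s => numAssigned s = k

variable {PB : GState D → GState D → ℝ} {R : (Fin D → Bool) → ℝ}

lemma backwardFlow_of_isTerminal {s : GState D} (hs : IsTerminal s) :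
    backwardFlow PB R s = R (toX s) := by
  rw [backwardFlow, isTerminal_iff_numAssigned_eq.mp hs, Nat.sub_self, flowAux]

lemma backwardFlow_of_not_isTerminal {s : GState D} (hs : ¬ IsTerminal s) :
    backwardFlow PB R s =
      ∑ s', if IsChild s s' then backwardFlow PB R s' * PB s' s else 0 := by
  have hlt : numAssigned s < D :=
    (numAssigned_le s).lt_of_ne (mt isTerminal_iff_numAssigned_eq.mpr hs)
  obtain ⟨n, hn⟩ : ∃ n, D - numAssigned s = n + 1 := ⟨D - numAssigned s - 1, by omega⟩
  rw [backwardFlow, hn, flowAux]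
  refine Finset.sum_congr rfl fun s' _ => ?_
  split_ifs with hs'
  · rw [backwardFlow, show D - numAssigned s' = n by have := hs'.numAssigned_eq; omega]
  · rfl

lemma backwardFlow_pos (hR : ∀ x, 0 < R x) (hPB : ∀ s s', IsChild s s' → 0 < PB s' s)
    (s : GState D) : 0 < backwardFlow PB R s := by
  induction s using induction_of_isChild with
  | terminal s hs => simpa [backwardFlow_of_isTerminal hs] using hR (toX s)
  | step s hs ih =>
    rw [backwardFlow_of_not_isTerminal hs]
    obtain ⟨s', hs'⟩ := exists_isChild_of_not_isTerminal hs
    refine Finset.sum_pos' (fun t _ => ?_) ⟨s', Finset.mem_univ _, ?_⟩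
    · split_ifs with ht
      exacts [(mul_pos (ih t ht) (hPB s t ht)).le, le_rfl]
    · rw [if_pos hs']
      exact mul_pos (ih s' hs') (hPB s s' hs')

lemma IsBackwardPolicy.sum_level_ite_isChild (hPB : IsBackwardPolicy PB) (k : ℕ) (s' : GState D) :
    ∑ s ∈ level D k, (if IsChild s s' then PB s' s else 0) =
      if numAssigned s' = k + 1 then 1 else 0 := by
  split_ifs with hs'
  · have hinit : s' ≠ initState D := by
      rintro rfl
      simp [numAssigned_eq_zero_iff.mpr rfl] at hs'
    obtain ⟨-, hsupp, hsum⟩ := hPB s' hinit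
    rw [level, Finset.sum_filter, ← hsum]
    refine Finset.sum_congr rfl fun s _ => ?_
    by_cases hs : IsChild s s'
    · rw [if_pos hs, if_pos (by have := hs.numAssigned_eq; omega)]
    · rw [if_neg hs, ite_self, not_not.mp (mt (hsupp s) hs)]
  · refine Finset.sum_eq_zero fun s hs => if_neg fun hss' => hs' ?_
    rw [hss'.numAssigned_eq, (Finset.mem_filter.mp hs).2]

lemma sum_level_backwardFlow_succ (hPB : IsBackwardPolicy PB) {k : ℕ} (hk : k < D) :
    ∑ s ∈ level D k, backwardFlow PB R s = ∑ s ∈ level D (k + 1), backwardFlow PB R s := by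
  have hnt : ∀ s ∈ level D k, ¬ IsTerminal s := fun s hs hts => by
    rw [level, Finset.mem_filter, isTerminal_iff_numAssigned_eq.mp hts] at hs
    omega
  calc ∑ s ∈ level D k, backwardFlow PB R s
      = ∑ s ∈ level D k, ∑ s', if IsChild s s' then backwardFlow PB R s' * PB s' s else 0 :=
        Finset.sum_congr rfl fun s hs => backwardFlow_of_not_isTerminal (hnt s hs)
    _ = ∑ s', backwardFlow PB R s' * ∑ s ∈ level D k, if IsChild s s' then PB s' s else 0 := by
        rw [Finset.sum_comm]
        simp_rw [Finset.mul_sum, mul_ite, mul_zero]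
    _ = ∑ s ∈ level D (k + 1), backwardFlow PB R s := by
        simp_rw [hPB.sum_level_ite_isChild, mul_ite, mul_one, mul_zero, level,
          Finset.sum_filter]

lemma sum_level_backwardFlow_eq_sum (hPB : IsBackwardPolicy PB) {k : ℕ} (hk : k ≤ D) :
    ∑ s ∈ level D k, backwardFlow PB R s = ∑ x, R x := by
  induction hk using Nat.decreasingInduction with
  | of_succ k hk ih => rw [sum_level_backwardFlow_succ hPB hk, ih]
  | self =>
    have hterminal : ∀ s ∈ level D D, IsTerminal s := fun s hs =>
      isTerminal_iff_numAssigned_eq.mpr (Finset.mem_filter.mp hs).2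
    refine Finset.sum_nbij' toX ofX (fun _ _ => Finset.mem_univ _)
      (fun x _ => Finset.mem_filter.mpr ⟨Finset.mem_univ _,
        isTerminal_iff_numAssigned_eq.mp (isTerminal_ofX x)⟩)
      (fun s hs => (hterminal s hs).ofX_toX) (fun x _ => toX_ofX x)
      (fun s hs => backwardFlow_of_isTerminal (hterminal s hs))

lemma backwardFlow_initState (hPB : IsBackwardPolicy PB) :
    backwardFlow PB R (initState D) = ∑ x, R x := by
  have hlevel : level D 0 = {initState D} := by
    ext s
    simp [level, numAssigned_eq_zero_iff]
  simpa [hlevel] using sum_level_backwardFlow_eq_sum (R := R) hPB (Nat.zero_le D)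

lemma isForwardPolicy_balancedForward (hR : ∀ x, 0 < R x)
    (hPB : ∀ s s', IsChild s s' → 0 < PB s' s) : IsForwardPolicy (balancedForward PB R) := by
  intro s hs
  have hF := backwardFlow_pos hR hPB
  refine ⟨fun s' => ?_, fun s' h => by_contra fun hs' => h (if_neg hs'), ?_⟩
  · unfold balancedForward
    split_ifs with hs'
    exacts [div_nonneg (mul_nonneg (hF s').le (hPB s s' hs').le) (hF s).le, le_rfl]
  · have hsum : ∑ s', balancedForward PB R s s' =
        (∑ s', if IsChild s s' then backwardFlow PB R s' * PB s' s else 0) /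
          backwardFlow PB R s := by
      rw [Finset.sum_div]
      refine Finset.sum_congr rfl fun s' _ => ?_
      rw [balancedForward, ite_div, zero_div]
    rw [hsum, ← backwardFlow_of_not_isTerminal hs, div_self (hF s).ne']

lemma IsPath.backwardFlow_mul_trajPF_balancedForward (hR : ∀ x, 0 < R x)
    (hPB : ∀ s s', IsChild s s' → 0 < PB s' s) {l : List (GState D)} {s t : GState D}
    (hl : IsPath l s t) :
    backwardFlow PB R s * trajPF (balancedForward PB R) l = backwardFlow PB R t * trajPB PB l := by
  induction hl using IsPath.induction_snoc with
  | singleton => simp [trajPF, trajPB]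
  | snoc l t u hl htu ih =>
    have ht := hl.2.2
    have hFt := (backwardFlow_pos hR hPB t).ne'
    rw [trajPF_snoc _ ht, trajPB_snoc _ ht, balancedForward, if_pos htu, ← mul_assoc, ih]
    field_simp

lemma trajBalance_balancedForward (hR : ∀ x, 0 < R x)
    (hPB : ∀ s s', IsChild s s' → 0 < PB s' s) :
    TrajBalance (balancedForward PB R) PB (backwardFlow PB R (initState D)) R := by
  intro l x hl hx
  rw [(hl.isPath hx).backwardFlow_mul_trajPF_balancedForward hR hPB,
    backwardFlow_of_isTerminal (isTerminal_ofX x), toX_ofX]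

variable {PF : GState D → GState D → ℝ} {Z : ℝ}

lemma TrajBalance.mul_trajPF_eq (hPF : IsForwardPolicy PF) (hTB : TrajBalance PF PB Z R)
    (s : GState D) {l : List (GState D)} (hl : IsPath l (initState D) s) :
    Z * trajPF PF l = backwardFlow PB R s * trajPB PB l := by
  induction s using induction_of_isChild generalizing l with
  | terminal s hs =>
    rw [← hs.ofX_toX] at hl
    rw [hTB l (toX s) hl.isCompleteTraj hl.2.2, backwardFlow_of_isTerminal hs]
  | step s hs ih =>
    obtain ⟨-, hsupp, hsum⟩ := hPF s hs
    have hchild : ∀ s', Z * trajPF PF l * PF s s' =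
        (if IsChild s s' then backwardFlow PB R s' * PB s' s else 0) * trajPB PB l := by
      intro s'
      by_cases hs' : IsChild s s'
      · have := ih s' hs' (hl.snoc hs')
        rw [trajPF_snoc _ hl.2.2, trajPB_snoc _ hl.2.2] at this
        rw [if_pos hs']
        linear_combination this
      · rw [if_neg hs', not_not.mp (mt (hsupp s') hs')]
        ring
    calc Z * trajPF PF l = ∑ s', Z * trajPF PF l * PF s s' := by
          rw [← Finset.mul_sum, hsum, mul_one]
      _ = backwardFlow PB R s * trajPB PB l := by
        rw [Finset.sum_congr rfl fun s' _ => hchild s', ← Finset.sum_mul,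
          ← backwardFlow_of_not_isTerminal hs]

lemma TrajBalance.eq_backwardFlow_initState (hPF : IsForwardPolicy PF)
    (hTB : TrajBalance PF PB Z R) : Z = backwardFlow PB R (initState D) := by
  simpa [trajPF, trajPB] using hTB.mul_trajPF_eq hPF _ (isPath_singleton _)

lemma TrajBalance.mul_backwardFlow_eq (hPB : ∀ s s', IsChild s s' → 0 < PB s' s)
    (hPF : IsForwardPolicy PF) (hTB : TrajBalance PF PB Z R) {s s' : GState D}
    (hs' : IsChild s s') :
    PF s s' * backwardFlow PB R s = backwardFlow PB R s' * PB s' s := by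
  obtain ⟨l, hl⟩ := exists_isPath_initState s
  have hprefix := hTB.mul_trajPF_eq hPF s hl
  have hextended := hTB.mul_trajPF_eq hPF s' (hl.snoc hs')
  rw [trajPF_snoc _ hl.2.2, trajPB_snoc _ hl.2.2] at hextended
  refine mul_right_cancel₀ (trajPB_pos hPB hl.1).ne' ?_
  linear_combination hextended - PF s s' * hprefix

end

theorem statement15_general {D : ℕ}
    (PB : GState D → GState D → ℝ) (hPB : IsBackwardPolicy PB)
    (hBpos : ∀ s s' : GState D, IsChild s s' → 0 < PB s' s)
    (R : (Fin D → Bool) → ℝ) (hR : ∀ x, 0 < R x) :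
    (∃ (PF : GState D → GState D → ℝ) (Z : ℝ), 0 < Z ∧ IsForwardPolicy PF ∧
        TrajBalance PF PB Z R ∧ Z = ∑ x : Fin D → Bool, R x) ∧
    (∀ (PF PF' : GState D → GState D → ℝ) (Z Z' : ℝ),
        0 < Z → IsForwardPolicy PF → TrajBalance PF PB Z R →
        0 < Z' → IsForwardPolicy PF' → TrajBalance PF' PB Z' R →
        Z = Z' ∧ ∀ s s' : GState D, IsChild s s' → PF s s' = PF' s s') := by
  refine ⟨⟨balancedForward PB R, backwardFlow PB R (initState D), backwardFlow_pos hR hBpos _,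
    isForwardPolicy_balancedForward hR hBpos, trajBalance_balancedForward hR hBpos,
    backwardFlow_initState hPB⟩, ?_⟩
  intro PF PF' Z Z' _ hPF hTB _ hPF' hTB'
  refine ⟨(hTB.eq_backwardFlow_initState hPF).trans (hTB'.eq_backwardFlow_initState hPF').symm,
    fun s s' hs' => ?_⟩
  refine mul_right_cancel₀ (backwardFlow_pos hR hBpos s).ne' ?_
  rw [hTB.mul_backwardFlow_eq hBpos hPF hs', hTB'.mul_backwardFlow_eq hBpos hPF' hs']

/-- For a backward policy `P_B` positive on every edge of `G` and a
positive reward `R`, there exists exactly one pair `(P_F, Z)` with `Z > 0` and `P_F` a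
forward policy such that `(P_F, P_B, Z)` satisfies trajectory balance for `R` (uniqueness
of `P_F` as a policy, i.e. on the edges of `G`); moreover this `Z` equals `Σ_{x∈X} R(x)`. -/
theorem statement15 {D : ℕ} (hD : 1 ≤ D)
    (PB : GState D → GState D → ℝ) (hPB : IsBackwardPolicy PB)
    (hBpos : ∀ s s' : GState D, IsChild s s' → 0 < PB s' s)
    (R : (Fin D → Bool) → ℝ) (hR : ∀ x, 0 < R x) :
    (∃ (PF : GState D → GState D → ℝ) (Z : ℝ), 0 < Z ∧ IsForwardPolicy PF ∧
        TrajBalance PF PB Z R ∧ Z = ∑ x : Fin D → Bool, R x) ∧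
    (∀ (PF PF' : GState D → GState D → ℝ) (Z Z' : ℝ),
        0 < Z → IsForwardPolicy PF → TrajBalance PF PB Z R →
        0 < Z' → IsForwardPolicy PF' → TrajBalance PF' PB Z' R →
        Z = Z' ∧ ∀ s s' : GState D, IsChild s s' → PF s s' = PF' s s') :=
  statement15_general PB hPB hBpos R hR
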